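/- Let k be a field and r ≥ 2 an integer. Let X = X′ ⊕ J_2 where X′ is any finite direct sum of modules J_{p_i} with p_i ≥ 1, and Y = Y′ ⊕ J_r with Y′ = ⊕_{j} J_{q_j} where every q_j ≥ r. Let C : X → Y be a k[T]-linear map with T²∘C = 0, and assume that the component c : J_2 → J_r of C between the distinguished summands satisfies T∘c ≠ 0. Then there exist a k[T]-linear map C′ : X′ → Y′ with T²∘C′ = 0 and k[T]-module isomorphisms α : X → X′ ⊕ J_2 and β : Y → Y′ ⊕ J_r such that β∘C = (C′ ⊕ τ)∘α, where τ : J_2 → J_r is multiplication by T^{r−2}. In particular, the triple (X, Y, C) has a direct summand isomorphic to (J_2, J_r, τ). -/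

import Mathlib

open Polynomial

/-- `J k a` is the `k[T]`-module `k[T]/(T^a)` (with `T` the polynomial variable `X`). -/
abbrev J (k : Type*) [Field k] (a : ℕ) : Type _ :=
  Polynomial k ⧸ Ideal.span {(X : Polynomial k) ^ a}

/-- Multiplication by `T^e` as a `k[T]`-linear map `J_a → J_b`; it is well defined
when `b ≤ e + a`, and we set it to `0` otherwise. -/
noncomputable def mulTpow (k : Type*) [Field k] (a b e : ℕ) :
    J k a →ₗ[Polynomial k] J k b :=
  if h : b ≤ e + a then
    Submodule.liftQ (Ideal.span {(X : Polynomial k) ^ a})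
      ((Ideal.span {(X : Polynomial k) ^ b}).mkQ ∘ₗ
        ((X : Polynomial k) ^ e • (LinearMap.id : Polynomial k →ₗ[Polynomial k] Polynomial k)))
      (by
        refine Submodule.span_le.mpr ?_
        intro x hx
        rw [Set.mem_singleton_iff] at hx
        subst hx
        simp only [SetLike.mem_coe, LinearMap.mem_ker, LinearMap.comp_apply,
          LinearMap.smul_apply, LinearMap.id_apply, Submodule.mkQ_apply,
          Submodule.Quotient.mk_eq_zero, smul_eq_mul]
        exact Ideal.mem_span_singleton.mpr (by
          rw [← pow_add]; exact pow_dvd_pow X h))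
  else 0

/-!
Write `C` as a block matrix `[[A, b], [d, c]]`. Since `T² c = 0` but `T c ≠ 0`, we get
`c 1 = T^{r-2} g` with `g` invertible in `J_r`, so an automorphism `γ` of `J_r` turns `c` into `τ`.
The elements of `J_r` killed by `T²` are exactly the image of the injective map `τ`, hence
`γ ∘ d = τ ∘ σ` for some `σ`; and since every `q_j ≥ r`, `b` extends along `τ` to some
`ρ : J_r → Y'`. The coordinate changes `(x, t) ↦ (x, t + σ x)` and `(y, z) ↦ (y - ρ (γ z), γ z)`
then bring `C` to `(A - ρ τ σ) ⊕ τ`.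
-/
namespace J

variable {k : Type*} [Field k]

lemma smul_mk {a : ℕ} (f g : k[X]) :
    f • (Ideal.Quotient.mk (Ideal.span {(X : k[X]) ^ a}) g) = Ideal.Quotient.mk _ (f * g) :=
  rfl

lemma X_pow_smul_eq_zero {a : ℕ} (t : J k a) : (X : k[X]) ^ a • t = 0 := by
  obtain ⟨f, rfl⟩ := Ideal.Quotient.mk_surjective t
  rw [smul_mk, Ideal.Quotient.eq_zero_iff_dvd]
  exact dvd_mul_right _ _

lemma linearMap_ext {a : ℕ} {M : Type*} [AddCommGroup M] [Module k[X] M]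
    {f g : J k a →ₗ[k[X]] M} (h : f 1 = g 1) : f = g :=
  Submodule.linearMap_qext _ (LinearMap.ext_ring h)

lemma exists_mk_X_pow_mul_eq {a m : ℕ} (hm : m ≤ a) {z : J k a} (hz : (X : k[X]) ^ m • z = 0) :
    ∃ f, Ideal.Quotient.mk _ (X ^ (a - m) * f) = z := by
  obtain ⟨g, rfl⟩ := Ideal.Quotient.mk_surjective z
  rw [smul_mk, Ideal.Quotient.eq_zero_iff_dvd, ← Nat.add_sub_cancel' hm, pow_add,
    mul_dvd_mul_iff_left (pow_ne_zero _ X_ne_zero)] at hz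
  obtain ⟨f, rfl⟩ := hz
  exact ⟨f, rfl⟩

lemma isUnit_mk_of_not_X_dvd {a : ℕ} {g : k[X]} (hg : ¬ X ∣ g) :
    IsUnit (Ideal.Quotient.mk (Ideal.span {(X : k[X]) ^ a}) g) := by
  have := PrincipalIdealRing.isMaximal_of_irreducible (irreducible_X (R := k))
  rw [← Ideal.span_singleton_pow]
  exact Ideal.Quotient.isUnit_mk_pow_of_notMem _ (by rwa [Ideal.mem_span_singleton])

end J

section mulTpow

variable {k : Type*} [Field k] {a b e : ℕ}

lemma mulTpow_mk (h : b ≤ e + a) (f : k[X]) :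
    mulTpow k a b e (Ideal.Quotient.mk _ f) = Ideal.Quotient.mk _ (X ^ e * f) := by
  rw [mulTpow, dif_pos h]
  rfl

lemma mulTpow_one (h : b ≤ e + a) : mulTpow k a b e 1 = Ideal.Quotient.mk _ (X ^ e) := by
  rw [← map_one (Ideal.Quotient.mk _), mulTpow_mk h, mul_one]

lemma mulTpow_injective (h : b = e + a) : Function.Injective (mulTpow k a b e) := by
  rw [← LinearMap.ker_eq_bot, LinearMap.ker_eq_bot']
  intro t ht
  obtain ⟨f, rfl⟩ := Ideal.Quotient.mk_surjective t
  rw [mulTpow_mk h.le, Ideal.Quotient.eq_zero_iff_dvd, h, pow_add,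
    mul_dvd_mul_iff_left (pow_ne_zero _ X_ne_zero)] at ht
  exact Ideal.Quotient.eq_zero_iff_dvd _ _ |>.mpr ht

lemma exists_mulTpow_eq (h : b = e + a) {z : J k b} (hz : (X : k[X]) ^ a • z = 0) :
    ∃ t, mulTpow k a b e t = z := by
  obtain ⟨f, rfl⟩ := J.exists_mk_X_pow_mul_eq (by omega) hz
  exact ⟨Ideal.Quotient.mk _ f, by rw [mulTpow_mk h.le]; congr; omega⟩

lemma exists_mulTpow_comp_eq (h : b = e + a) {M : Type*} [AddCommGroup M] [Module k[X] M]
    (d : M →ₗ[k[X]] J k b) (hd : ∀ x, (X : k[X]) ^ a • d x = 0) :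
    ∃ σ : M →ₗ[k[X]] J k a, mulTpow k a b e ∘ₗ σ = d := by
  have hrange : ∀ x, d x ∈ LinearMap.range (mulTpow k a b e) :=
    fun x ↦ exists_mulTpow_eq h (hd x)
  refine ⟨(LinearEquiv.ofInjective _ (mulTpow_injective h)).symm.toLinearMap ∘ₗ
    d.codRestrict _ hrange, ?_⟩
  ext x
  simp

lemma exists_comp_mulTpow_eq (h : b = e + a) {c : ℕ} (hbc : b ≤ c)
    (f : J k a →ₗ[k[X]] J k c) : ∃ ρ : J k b →ₗ[k[X]] J k c, ρ ∘ₗ mulTpow k a b e = f := by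
  have hf : (X : k[X]) ^ a • f 1 = 0 := by rw [← map_smul, J.X_pow_smul_eq_zero, map_zero]
  obtain ⟨g, hg⟩ := J.exists_mk_X_pow_mul_eq (by omega) hf
  refine ⟨g • mulTpow k b c (c - b), J.linearMap_ext ?_⟩
  rw [LinearMap.comp_apply, LinearMap.smul_apply, mulTpow_one h.le, mulTpow_mk (by omega),
    J.smul_mk, ← hg, ← mul_assoc, mul_assoc, ← pow_add, mul_comm]
  congr 3
  omega

lemma exists_comp_mulTpow_eq_pi (h : b = e + a) {ι : Type*} {q : ι → ℕ} (hq : ∀ i, b ≤ q i)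
    (f : J k a →ₗ[k[X]] ((i : ι) → J k (q i))) :
    ∃ ρ : J k b →ₗ[k[X]] ((i : ι) → J k (q i)), ρ ∘ₗ mulTpow k a b e = f := by
  choose ρ hρ using fun i ↦ exists_comp_mulTpow_eq h (hq i) (LinearMap.proj i ∘ₗ f)
  exact ⟨LinearMap.pi ρ, LinearMap.ext fun t ↦ funext fun i ↦ LinearMap.congr_fun (hρ i) t⟩

lemma exists_linearEquiv_comp_eq_mulTpow (h : b = e + (a + 1)) (c : J k (a + 1) →ₗ[k[X]] J k b)
    (hc : (X : k[X]) ^ a • c ≠ 0) :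
    ∃ γ : J k b ≃ₗ[k[X]] J k b, γ.toLinearMap ∘ₗ c = mulTpow k (a + 1) b e := by
  subst h
  have hv : (X : k[X]) ^ (a + 1) • c 1 = 0 := by rw [← map_smul, J.X_pow_smul_eq_zero, map_zero]
  obtain ⟨g, hg⟩ := J.exists_mk_X_pow_mul_eq (by omega) hv
  have hgX : ¬ X ∣ g := by
    rintro ⟨g, rfl⟩
    refine hc (J.linearMap_ext ?_)
    rw [LinearMap.smul_apply, ← hg, J.smul_mk, LinearMap.zero_apply, Ideal.Quotient.eq_zero_iff_dvd]
    exact ⟨g, by rw [Nat.add_sub_cancel]; ring⟩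
  have hu := J.isUnit_mk_of_not_X_dvd (a := e + (a + 1)) hgX
  refine ⟨DistribMulAction.toLinearEquiv k[X] _ hu.unit⁻¹, J.linearMap_ext ?_⟩
  rw [LinearMap.comp_apply, LinearEquiv.coe_coe, DistribMulAction.toLinearEquiv_apply, ← hg,
    mulTpow_one le_rfl, Nat.add_sub_cancel, map_mul, Units.smul_def, smul_eq_mul,
    mul_comm, mul_assoc, hu.mul_val_inv, mul_one]

end mulTpow

section BlockTriangular

open LinearMap

variable {R : Type*} [Ring R] {M₁ M₂ N₁ N₂ : Type*} [AddCommGroup M₁] [AddCommGroup M₂]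
  [AddCommGroup N₁] [AddCommGroup N₂] [Module R M₁] [Module R M₂] [Module R N₁] [Module R N₂]

theorem LinearMap.exists_linearEquiv_comp_eq_prodMap (C : M₁ × M₂ →ₗ[R] N₁ × N₂)
    (τ : M₂ →ₗ[R] N₂) (γ : N₂ ≃ₗ[R] N₂) (σ : M₁ →ₗ[R] M₂) (ρ : N₂ →ₗ[R] N₁)
    (hc : γ.toLinearMap ∘ₗ snd R N₁ N₂ ∘ₗ C ∘ₗ inr R M₁ M₂ = τ)
    (hd : γ.toLinearMap ∘ₗ snd R N₁ N₂ ∘ₗ C ∘ₗ inl R M₁ M₂ = τ ∘ₗ σ)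
    (hb : ρ ∘ₗ τ = fst R N₁ N₂ ∘ₗ C ∘ₗ inr R M₁ M₂) :
    ∃ (α : (M₁ × M₂) ≃ₗ[R] (M₁ × M₂)) (β : (N₁ × N₂) ≃ₗ[R] (N₁ × N₂)),
      β.toLinearMap ∘ₗ C =
        (fst R N₁ N₂ ∘ₗ C ∘ₗ inl R M₁ M₂ - ρ ∘ₗ τ ∘ₗ σ).prodMap τ ∘ₗ α.toLinearMap := by
  refine ⟨.skewProd (.refl R M₁) (.refl R M₂) σ,
    (LinearEquiv.prodComm R N₁ N₂).trans ((γ.skewProd (.refl R N₁) (-(ρ ∘ₗ γ.toLinearMap))).trans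
      (LinearEquiv.prodComm R N₂ N₁)), ?_⟩
  have hc' (t : M₂) : γ (C (0, t)).2 = τ t := LinearMap.congr_fun hc t
  have hd' (x : M₁) : γ (C (x, 0)).2 = τ (σ x) := LinearMap.congr_fun hd x
  have hb' (t : M₂) : (C (0, t)).1 = ρ (τ t) := (LinearMap.congr_fun hb t).symm
  ext x <;> simp [hc', hd', hb', sub_eq_add_neg]

end BlockTriangular

theorem split_off_J2_Jr_general (k : Type*) [Field k] (rr : ℕ) (hrr : 2 ≤ rr)
    (r s : ℕ) (p : Fin r → ℕ) (q : Fin s → ℕ)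
    (hq : ∀ j, rr ≤ q j)
    (C : (((i : Fin r) → J k (p i)) × J k 2) →ₗ[Polynomial k]
      (((j : Fin s) → J k (q j)) × J k rr))
    (hC : ∀ x, ((X : Polynomial k) ^ 2) • C x = 0)
    (hcomp : ¬ ∀ x : J k 2,
      (X : Polynomial k) •
        ((LinearMap.snd (Polynomial k) ((j : Fin s) → J k (q j)) (J k rr))
          (C ((LinearMap.inr (Polynomial k) ((i : Fin r) → J k (p i)) (J k 2)) x))) = 0) :
    ∃ C' : ((i : Fin r) → J k (p i)) →ₗ[Polynomial k] ((j : Fin s) → J k (q j)),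
      (∀ x, ((X : Polynomial k) ^ 2) • C' x = 0) ∧
      ∃ (α : (((i : Fin r) → J k (p i)) × J k 2) ≃ₗ[Polynomial k]
          (((i : Fin r) → J k (p i)) × J k 2))
        (β : (((j : Fin s) → J k (q j)) × J k rr) ≃ₗ[Polynomial k]
          (((j : Fin s) → J k (q j)) × J k rr)),
        β.toLinearMap ∘ₗ C = (C'.prodMap (mulTpow k 2 rr (rr - 2))) ∘ₗ α.toLinearMap := by
  have hrr' : rr = (rr - 2) + (1 + 1) := by omega
  obtain ⟨γ, hγ⟩ := exists_linearEquiv_comp_eq_mulTpow hrr' (.snd _ _ _ ∘ₗ C ∘ₗ .inr _ _ _)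
    fun h ↦ hcomp fun t ↦ by simpa using LinearMap.congr_fun h t
  obtain ⟨σ, hσ⟩ := exists_mulTpow_comp_eq hrr'
    (γ.toLinearMap ∘ₗ .snd _ _ _ ∘ₗ C ∘ₗ .inl _ _ _)
    fun x ↦ by
      change X ^ 2 • γ (C (x, 0)).2 = 0
      rw [← map_smul, ← Prod.smul_snd, hC, Prod.snd_zero, map_zero]
  obtain ⟨ρ, hρ⟩ := exists_comp_mulTpow_eq_pi hrr' hq (.fst _ _ _ ∘ₗ C ∘ₗ .inr _ _ _)
  refine ⟨_, fun x ↦ ?_, C.exists_linearEquiv_comp_eq_prodMap _ γ σ ρ hγ hσ.symm hρ⟩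
  change X ^ 2 • ((C (x, 0)).1 - ρ (mulTpow k 2 rr (rr - 2) (σ x))) = 0
  rw [smul_sub, ← Prod.smul_fst, hC, ← map_smul, ← map_smul, J.X_pow_smul_eq_zero, map_zero,
    map_zero, Prod.fst_zero, sub_zero]

/-- Splitting off a `(J_2, J_r, T^{r-2})` summand: with `r ≥ 2`, arbitrary `p_i ≥ 1`,
all `q_j ≥ r`, if `C : X' ⊕ J_2 → Y' ⊕ J_r` satisfies `T² ∘ C = 0` and the component
`c : J_2 → J_r` between the distinguished summands has `T ∘ c ≠ 0`, then after suitable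
isomorphisms `C` is the direct sum of a map `C' : X' → Y'` (with `T² ∘ C' = 0`) and
multiplication by `T^{r-2} : J_2 → J_r`. -/
theorem split_off_J2_Jr (k : Type*) [Field k] (rr : ℕ) (hrr : 2 ≤ rr)
    (r s : ℕ) (p : Fin r → ℕ) (q : Fin s → ℕ)
    (hp : ∀ i, 1 ≤ p i) (hq : ∀ j, rr ≤ q j)
    (C : (((i : Fin r) → J k (p i)) × J k 2) →ₗ[Polynomial k]
      (((j : Fin s) → J k (q j)) × J k rr))
    (hC : ∀ x, ((X : Polynomial k) ^ 2) • C x = 0)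
    (hcomp : ¬ ∀ x : J k 2,
      (X : Polynomial k) •
        ((LinearMap.snd (Polynomial k) ((j : Fin s) → J k (q j)) (J k rr))
          (C ((LinearMap.inr (Polynomial k) ((i : Fin r) → J k (p i)) (J k 2)) x))) = 0) :
    ∃ C' : ((i : Fin r) → J k (p i)) →ₗ[Polynomial k] ((j : Fin s) → J k (q j)),
      (∀ x, ((X : Polynomial k) ^ 2) • C' x = 0) ∧
      ∃ (α : (((i : Fin r) → J k (p i)) × J k 2) ≃ₗ[Polynomial k]
          (((i : Fin r) → J k (p i)) × J k 2))
        (β : (((j : Fin s) → J k (q j)) × J k rr) ≃ₗ[Polynomial k]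
          (((j : Fin s) → J k (q j)) × J k rr)),
        β.toLinearMap ∘ₗ C = (C'.prodMap (mulTpow k 2 rr (rr - 2))) ∘ₗ α.toLinearMap :=
  split_off_J2_Jr_general k rr hrr r s p q hq C hC hcomp
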